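/- arXiv:1712.10088 — 6 statements merged into one kernel-verified Lean document; each statement's English description precedes it below -/
import Mathlib

section
/- Let T be an N×N Hermitian positive definite complex matrix, a ∈ ℂ^N nonzero, and β ∈ ℝ. Then T + β·a·aᴴ is positive definite if and only if β > -1/(aᴴT⁻¹a). -/
open Matrix
open scoped ComplexOrder

lemma cs_dot {N : ℕ} (u v : Fin N → ℂ) :
    Complex.normSq (star u ⬝ᵥ v) ≤ (star u ⬝ᵥ u).re * (star v ⬝ᵥ v).re := by
  let e : (Fin N → ℂ) → EuclideanSpace ℂ (Fin N) := fun w => WithLp.toLp 2 w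
  have hin : ∀ w z : Fin N → ℂ, (inner (𝕜 := ℂ) (e w) (e z)) = star w ⬝ᵥ z := by
    intro w z
    simp [e, PiLp.inner_apply, RCLike.inner_apply, dotProduct, mul_comm]
  have h1 : ‖inner (𝕜 := ℂ) (e u) (e v)‖ ≤ ‖e u‖ * ‖e v‖ := norm_inner_le_norm _ _
  have h2 : (star u ⬝ᵥ u).re = ‖e u‖ ^ 2 := by
    have := inner_self_eq_norm_sq_to_K (𝕜 := ℂ) (e u)
    rw [hin] at this
    simpa [← Complex.ofReal_pow] using congrArg Complex.re this
  have h3 : (star v ⬝ᵥ v).re = ‖e v‖ ^ 2 := by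
    have := inner_self_eq_norm_sq_to_K (𝕜 := ℂ) (e v)
    rw [hin] at this
    simpa [← Complex.ofReal_pow] using congrArg Complex.re this
  have h4 : Complex.normSq (star u ⬝ᵥ v) = ‖inner (𝕜 := ℂ) (e u) (e v)‖ ^ 2 := by
    rw [hin, ← Complex.sq_norm]
  rw [h2, h3, h4, ← mul_pow]
  exact pow_le_pow_left₀ (norm_nonneg _) h1 2


/-- Positive-definiteness of the rank-one update: `T + β a aᴴ ≻ 0` iff
`β > -1/(aᴴ T⁻¹ a)`. -/
theorem rank_one_posdef {N : ℕ} (T : Matrix (Fin N) (Fin N) ℂ) (hT : T.PosDef)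
    (a : Fin N → ℂ) (ha : a ≠ 0) (β : ℝ) :
    (T + (β : ℂ) • vecMulVec a (star a)).PosDef ↔
      β > -1 / (star a ⬝ᵥ T⁻¹.mulVec a).re := by
  have hTiH : T⁻¹.IsHermitian := hT.isHermitian.inv
  have hUdet : IsUnit T.det := (isUnit_iff_isUnit_det _).1 hT.isUnit
  have hTTinv : ∀ w : Fin N → ℂ, T *ᵥ (T⁻¹ *ᵥ w) = w := by
    intro w; rw [mulVec_mulVec, Matrix.mul_nonsing_inv _ hUdet, one_mulVec]
  have hTinvT : ∀ w : Fin N → ℂ, T⁻¹ *ᵥ (T *ᵥ w) = w := by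
    intro w; rw [mulVec_mulVec, Matrix.nonsing_inv_mul _ hUdet, one_mulVec]
  set c : ℝ := (star a ⬝ᵥ T⁻¹.mulVec a).re with hc_def
  have hcpos0 : (0 : ℂ) < star a ⬝ᵥ T⁻¹ *ᵥ a := hT.inv.dotProduct_mulVec_pos ha
  rw [Complex.lt_def] at hcpos0
  have hc : 0 < c := by simpa using hcpos0.1
  have hce : star a ⬝ᵥ T⁻¹ *ᵥ a = (c : ℂ) := by
    apply Complex.ext <;> simp [hc_def, ← hcpos0.2]
  -- quadratic form identity
  have hvm : ∀ x : Fin N → ℂ, (vecMulVec a (star a)) *ᵥ x = (star a ⬝ᵥ x) • a := by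
    intro x; ext i
    simp only [mulVec, dotProduct, vecMulVec_apply, Pi.smul_apply, smul_eq_mul,
      Finset.sum_mul, Pi.star_apply]
    exact Finset.sum_congr rfl fun j _ => by ring
  have hquad : ∀ x : Fin N → ℂ,
      star x ⬝ᵥ (T + (β : ℂ) • vecMulVec a (star a)) *ᵥ x
        = star x ⬝ᵥ T *ᵥ x + (β : ℂ) * Complex.normSq (star a ⬝ᵥ x) := by
    intro x
    rw [add_mulVec, dotProduct_add, smul_mulVec, dotProduct_smul, hvm,
      dotProduct_smul]
    congr 1
    rw [smul_eq_mul, smul_eq_mul, star_dotProduct x a]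
    congr 1
    have : (star a ⬝ᵥ x) * (starRingEnd ℂ) (star a ⬝ᵥ x)
        = (Complex.normSq (star a ⬝ᵥ x) : ℂ) := Complex.mul_conj _
    rw [← this, RCLike.star_def]
  -- Hermitian
  have hH : (T + (β : ℂ) • vecMulVec a (star a)).IsHermitian := by
    refine hT.isHermitian.add ?_
    ext i j
    simp only [conjTranspose_apply, Matrix.smul_apply, vecMulVec_apply, star_mul',
      Pi.star_apply, smul_eq_mul, Complex.star_def, Complex.conj_conj,
      Complex.conj_ofReal, _root_.map_mul]
    ring
  -- real quadratic form of T
  have hQ : ∀ x : Fin N → ℂ, x ≠ 0 → 0 < (star x ⬝ᵥ T *ᵥ x).re := by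
    intro x hx
    have := hT.dotProduct_mulVec_pos hx
    rw [Complex.lt_def] at this
    simpa using this.1
  have hQim : ∀ x : Fin N → ℂ, (star x ⬝ᵥ T *ᵥ x).im = 0 := by
    intro x
    have h := star_dotProduct x (T *ᵥ x)
    rw [star_mulVec, hT.isHermitian.eq, ← dotProduct_mulVec] at h
    have := congrArg Complex.im h
    simp only [Complex.star_def, Complex.conj_im] at this
    linarith
  rw [posDef_iff_dotProduct_mulVec]
  constructor
  · rintro ⟨-, hpos⟩
    set x₀ : Fin N → ℂ := T⁻¹ *ᵥ a with hx₀def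
    have hx₀ : x₀ ≠ 0 :=
      ((Matrix.mulVec_injective_iff_isUnit.mpr hT.inv.isUnit).ne_iff'
        (mulVec_zero _)).2 ha
    have := hpos hx₀
    rw [hquad x₀, Complex.lt_def] at this
    have hre := this.1
    have hQx₀ : (star x₀ ⬝ᵥ T *ᵥ x₀).re = c := by
      have h1 : star x₀ ⬝ᵥ T *ᵥ x₀ = star x₀ ⬝ᵥ a := by rw [hx₀def, hTTinv]
      have h2 : star x₀ ⬝ᵥ a = star (star a ⬝ᵥ x₀) := star_dotProduct _ _
      rw [h1, h2, hx₀def, hce]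
      simp
    have hpx₀ : Complex.normSq (star a ⬝ᵥ x₀) = c ^ 2 := by
      rw [hx₀def, hce]
      simp [Complex.normSq_ofReal, sq]
    rw [hpx₀] at hre
    simp only [Complex.add_re, Complex.mul_re, Complex.ofReal_re, Complex.ofReal_im,
      Complex.zero_re] at hre
    rw [hQx₀] at hre
    rw [gt_iff_lt, div_lt_iff₀ hc]
    nlinarith [hre, hc, sq_nonneg c]
  · intro hβ
    rw [gt_iff_lt, div_lt_iff₀ hc] at hβ
    refine ⟨hH, fun x hx => ?_⟩
    rw [hquad x, Complex.lt_def]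
    set p : ℂ := star a ⬝ᵥ x with hp
    set Qre : ℝ := (star x ⬝ᵥ T *ᵥ x).re with hQre
    have hQx : 0 < Qre := hQ x hx
    -- Cauchy-Schwarz
    let S := by open scoped MatrixOrder in exact CFC.sqrt T
    have hSherm : S.IsHermitian := by
      open scoped MatrixOrder in exact (CFC.sqrt_nonneg T).posSemidef.1
    have hSS : S * S = T := by
      open scoped MatrixOrder in exact CFC.sqrt_mul_sqrt_self T hT.posSemidef.nonneg
    have hkey : ∀ w z : Fin N → ℂ, star (S *ᵥ w) ⬝ᵥ (S *ᵥ z) = star w ⬝ᵥ T *ᵥ z := by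
      intro w z
      rw [star_mulVec, hSherm.eq, ← dotProduct_mulVec, mulVec_mulVec, hSS]
    have hcs := cs_dot (S *ᵥ (T⁻¹ *ᵥ a)) (S *ᵥ x)
    rw [hkey, hkey, hkey] at hcs
    have e1 : star (T⁻¹ *ᵥ a) ⬝ᵥ T *ᵥ x = p := by
      rw [star_mulVec, hTiH.eq, ← dotProduct_mulVec, hTinvT]
    have e2 : star (T⁻¹ *ᵥ a) ⬝ᵥ T *ᵥ (T⁻¹ *ᵥ a) = (c : ℂ) := by
      rw [star_mulVec, hTiH.eq, ← dotProduct_mulVec, hTinvT, hce]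
    rw [e1, e2] at hcs
    simp only [Complex.ofReal_re] at hcs
    -- hcs : normSq p ≤ c * Qre
    constructor
    · simp only [Complex.add_re, Complex.mul_re, Complex.ofReal_re, Complex.ofReal_im,
        Complex.zero_re]
      have hns : 0 ≤ Complex.normSq p := Complex.normSq_nonneg p
      rcases le_or_gt 0 β with h0 | h0
      · have := mul_nonneg h0 hns
        simp only [Complex.normSq_eq_norm_sq] at *
        nlinarith
      · nlinarith [mul_le_mul_of_nonpos_left hcs h0.le, mul_pos hQx (by nlinarith : 0 < 1 + β * c)]
    · simp [hQim x]
end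

section
/- Let ξ₀, ξₖ be positive reals, ξ_c a nonzero complex number with |ξ_c|² < ξ₀ξₖ, and ρ > 0. The set of complex numbers β such that |γ|²-based response condition holds, parametrized as β = (p₁ + p₂e^{iφ})/(q₁ + q₂e^{iφ}) with p₁ = -c, p₂ = -R, q₁ = ξ_c + cξₖ, q₂ = Rξₖ for all real φ (where c, R are the center and radius of the γ-circle), is a circle in ℂ with center ξ₀/(|ξ_c|² - ξ₀ξₖ) (a real number) and radius |ξ_c|/(√ρ · | |ξ_c|² - ξ₀ξₖ |). -/
open Matrix

/-- Proposition 3: the Möbius transformation `β = -γ/(ξ_c + γξₖ)` maps the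
γ-circle (with center `c = -χξ_c/H₂₂` and radius `R = √(-det H)/|H₂₂|`) to
the circle in ℂ with center `ξ₀/(|ξ_c|² - ξ₀ξₖ)` (a real number) and radius
`|ξ_c|/(√ρ · ||ξ_c|² - ξ₀ξₖ|)`. -/
theorem beta_circle (ξ0 ξk ρ : ℝ) (ξc : ℂ)
    (hξ0 : 0 < ξ0) (hξk : 0 < ξk) (hξc : ξc ≠ 0)
    (hcs : (‖ξc‖) ^ 2 < ξ0 * ξk) (hρ : 0 < ρ)
    (χ H11 H22 detH : ℝ)
    (hχ : χ = ξk - ρ * ξ0)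
    (hH11 : H11 = (‖ξc‖) ^ 2 - ρ * ξ0 ^ 2)
    (hH22 : H22 = ξk ^ 2 - ρ * (‖ξc‖) ^ 2)
    (hdetH : detH = H11 * H22 - χ ^ 2 * (‖ξc‖) ^ 2)
    (h22ne : H22 ≠ 0) (hdetneg : detH < 0)
    (c : ℂ) (R : ℝ)
    (hc : c = -(χ • ξc) / (H22 : ℂ))
    (hR : R = Real.sqrt (-detH) / |H22|)
    (p₁ p₂ q₁ q₂ : ℂ)
    (hp₁ : p₁ = -c) (hp₂ : p₂ = -(R : ℂ))
    (hq₁ : q₁ = ξc + c * (ξk : ℂ)) (hq₂ : q₂ = ((R * ξk : ℝ) : ℂ)) :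
    {β : ℂ | ∃ φ : ℝ,
        β = (p₁ + p₂ * Complex.exp (φ * Complex.I)) /
            (q₁ + q₂ * Complex.exp (φ * Complex.I))} =
      {β : ℂ |
        ‖β - ((ξ0 / ((‖ξc‖) ^ 2 - ξ0 * ξk) : ℝ) : ℂ)‖ =
          ‖ξc‖ / (Real.sqrt ρ * |(‖ξc‖) ^ 2 - ξ0 * ξk|)} := by
  have habs : 0 < ‖ξc‖ := norm_pos_iff.mpr hξc
  set A := ‖ξc‖ ^ 2 with hA_def
  have hA : 0 < A := by rw [hA_def]; exact pow_pos habs 2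
  subst hχ hH22
  have hDneg : A - ξ0 * ξk < 0 := by linarith
  have hDne : A - ξ0 * ξk ≠ 0 := ne_of_lt hDneg
  have hdet : detH = -(ρ * (A - ξ0 * ξk) ^ 2) := by rw [hdetH, hH11]; ring
  have hdnn : (0:ℝ) < -detH := by
    rw [hdet, neg_neg, pow_two]
    exact mul_pos hρ (mul_self_pos.mpr hDne)
  have hR2 : R ^ 2 * (ξk ^ 2 - ρ * A) ^ 2 = ρ * (A - ξ0 * ξk) ^ 2 := by
    rw [hR, div_pow, sq_abs, Real.sq_sqrt (le_of_lt hdnn), hdet]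
    field_simp
  have hRpos : 0 < R := by
    rw [hR]; exact div_pos (Real.sqrt_pos.2 hdnn) (abs_pos.2 h22ne)
  set b : ℝ := ξ0 / (A - ξ0 * ξk) with hb_def
  set r : ℝ := ‖ξc‖ / (Real.sqrt ρ * |A - ξ0 * ξk|) with hr_def
  have hrpos : 0 < r := div_pos habs (by positivity)
  have hbD : b * (A - ξ0 * ξk) = ξ0 := by rw [hb_def]; field_simp
  have hr2 : r ^ 2 * (ρ * (A - ξ0 * ξk) ^ 2) = A := by
    rw [hr_def, div_pow, mul_pow, Real.sq_sqrt hρ.le, sq_abs, ← hA_def]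
    field_simp
  have hHc : ((ξk ^ 2 - ρ * A : ℝ) : ℂ) ≠ 0 := Complex.ofReal_ne_zero.2 h22ne
  have hns : Complex.normSq ξc = A := by rw [hA_def, Complex.sq_norm]
  -- scalar forms of q₁ and p₁
  have hcval : ((ξk ^ 2 - ρ * A : ℝ) : ℂ) * c = -(((ξk - ρ * ξ0 : ℝ) : ℂ) * ξc) := by
    rw [hc, Complex.real_smul, mul_comm, div_mul_cancel₀ _ hHc]
  have hq₁'' : ((ξk ^ 2 - ρ * A : ℝ) : ℂ) * q₁ = ((-(ρ * (A - ξ0 * ξk)) : ℝ) : ℂ) * ξc := by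
    rw [hq₁]
    linear_combination (norm := (push_cast; ring1)) (ξk : ℂ) * hcval
  have hp₁'' : ((ξk ^ 2 - ρ * A : ℝ) : ℂ) * p₁ = ((ξk - ρ * ξ0 : ℝ) : ℂ) * ξc := by
    rw [hp₁]
    linear_combination (norm := (push_cast; ring1)) (-1 : ℂ) * hcval
  -- normSq of q₁ and q₂
  have hq1sq : (ξk ^ 2 - ρ * A) ^ 2 * Complex.normSq q₁ = ρ ^ 2 * (A - ξ0 * ξk) ^ 2 * A := by
    have h := congrArg Complex.normSq hq₁''
    rw [Complex.normSq_mul, Complex.normSq_mul, Complex.normSq_ofReal,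
      Complex.normSq_ofReal, hns] at h
    linear_combination h
  have hq2sq : Complex.normSq q₂ = R ^ 2 * ξk ^ 2 := by
    rw [hq₂, Complex.normSq_ofReal]; ring
  have hqq : Complex.normSq q₁ ≠ Complex.normSq q₂ := by
    intro heq
    have hz : ρ * (A - ξ0 * ξk) ^ 2 * (ξk ^ 2 - ρ * A) = 0 := by
      linear_combination (-(ξk ^ 2)) * hR2 + hq1sq - (ξk ^ 2 - ρ * A) ^ 2 * heq
        - (ξk ^ 2 - ρ * A) ^ 2 * hq2sq
    exact h22ne ((mul_eq_zero.1 hz).resolve_left (mul_ne_zero hρ.ne' (pow_ne_zero 2 hDne)))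
  -- key identity
  have keyH : ∀ β : ℂ,
      (ξk ^ 2 - ρ * A) ^ 2 *
          (Complex.normSq (β * q₁ - p₁) - Complex.normSq (β * q₂ - p₂)) =
        -(ρ * (A - ξ0 * ξk) ^ 2) * (ξk ^ 2 - ρ * A) *
          (Complex.normSq (β - (b : ℂ)) - r ^ 2) := by
    intro β
    have f1 : ((ξk ^ 2 - ρ * A : ℝ) : ℂ) * (β * q₁ - p₁)
        = (β * ((-(ρ * (A - ξ0 * ξk)) : ℝ) : ℂ) - ((ξk - ρ * ξ0 : ℝ) : ℂ)) * ξc := by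
      linear_combination β * hq₁'' - hp₁''
    have f2 : β * q₂ - p₂ = β * ((R * ξk : ℝ) : ℂ) + (R : ℂ) := by
      rw [hq₂, hp₂]; ring
    have g1 : (ξk ^ 2 - ρ * A) ^ 2 * Complex.normSq (β * q₁ - p₁)
        = Complex.normSq (β * ((-(ρ * (A - ξ0 * ξk)) : ℝ) : ℂ) - ((ξk - ρ * ξ0 : ℝ) : ℂ)) * A := by
      calc (ξk ^ 2 - ρ * A) ^ 2 * Complex.normSq (β * q₁ - p₁)
          = Complex.normSq (((ξk ^ 2 - ρ * A : ℝ) : ℂ) * (β * q₁ - p₁)) := by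
            rw [Complex.normSq_mul, Complex.normSq_ofReal]; ring
        _ = _ := by rw [f1, Complex.normSq_mul, hns]
    rw [f2, mul_sub, g1]
    simp only [Complex.normSq_apply, Complex.mul_re, Complex.mul_im, Complex.sub_re,
      Complex.sub_im, Complex.add_re, Complex.add_im, Complex.ofReal_re, Complex.ofReal_im]
    linear_combination (-((ξk * β.re + 1) ^ 2 + (ξk * β.im) ^ 2)) * hR2
      + (-(ξk ^ 2 - ρ * A)) * hr2
      + (ρ * (ξk ^ 2 - ρ * A) * (b * (A - ξ0 * ξk) + ξ0)
          - 2 * ρ * (A - ξ0 * ξk) * (ξk ^ 2 - ρ * A) * β.re) * hbD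
  have hq2ne : q₂ ≠ 0 := by
    rw [hq₂]; exact Complex.ofReal_ne_zero.2 (mul_pos hRpos hξk).ne'
  ext β
  simp only [Set.mem_setOf_eq]
  constructor
  · rintro ⟨φ, hβ⟩
    set u := Complex.exp ((φ : ℂ) * Complex.I) with hu_def
    have hu : Complex.normSq u = 1 := by
      rw [hu_def, ← Complex.sq_norm, Complex.norm_exp_ofReal_mul_I]; norm_num
    have hden : q₁ + q₂ * u ≠ 0 := by
      intro h0
      apply hqq
      have h1 : q₁ = -(q₂ * u) := eq_neg_of_add_eq_zero_left h0
      rw [h1, Complex.normSq_neg, Complex.normSq_mul, hu, mul_one]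
    have h2 : β * (q₁ + q₂ * u) = p₁ + p₂ * u := by rw [hβ, div_mul_cancel₀ _ hden]
    have hn : Complex.normSq (β * q₁ - p₁) = Complex.normSq (β * q₂ - p₂) := by
      have h3 : β * q₁ - p₁ = u * (p₂ - β * q₂) := by linear_combination h2
      rw [h3, Complex.normSq_mul, hu, one_mul, ← Complex.normSq_neg]
      congr 1; ring
    have h4 := keyH β
    rw [hn, sub_self, mul_zero] at h4
    have h5 : Complex.normSq (β - (b : ℂ)) - r ^ 2 = 0 := by
      have hne : -(ρ * (A - ξ0 * ξk) ^ 2) * (ξk ^ 2 - ρ * A) ≠ 0 :=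
        mul_ne_zero (neg_ne_zero.2 (mul_ne_zero hρ.ne' (pow_ne_zero 2 hDne))) h22ne
      exact (mul_eq_zero.1 h4.symm).resolve_left hne
    have h6 : ‖β - (b : ℂ)‖ ^ 2 = r ^ 2 := by rw [Complex.sq_norm]; linarith
    have h7 := congrArg Real.sqrt h6
    rwa [Real.sqrt_sq (norm_nonneg _), Real.sqrt_sq hrpos.le] at h7
  · intro hmem
    have hn : Complex.normSq (β - (b : ℂ)) = r ^ 2 := by rw [← Complex.sq_norm, hmem]
    have hd2 : β * q₂ - p₂ ≠ 0 := by
      intro h0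
      rw [hq₂, hp₂] at h0
      have hRc : (R : ℂ) ≠ 0 := Complex.ofReal_ne_zero.2 hRpos.ne'
      have hkc : (ξk : ℂ) ≠ 0 := Complex.ofReal_ne_zero.2 hξk.ne'
      have h1 : (R : ℂ) * (β * ξk + 1) = 0 := by push_cast at h0 ⊢; linear_combination h0
      have h2 : β * (ξk : ℂ) = -1 := by
        have h2' := (mul_eq_zero.1 h1).resolve_left hRc
        linear_combination h2'
      have hβval : β = ((-(1 / ξk) : ℝ) : ℂ) := by
        push_cast
        field_simp
        linear_combination h2
      rw [hβval, ← Complex.ofReal_sub, Complex.normSq_ofReal] at hn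
      have h3 : (1 + b * ξk) ^ 2 = r ^ 2 * ξk ^ 2 := by
        have e : (1 + b * ξk) = (-(-(1 / ξk) - b)) * ξk := by field_simp; ring
        rw [e]
        calc (-(-(1 / ξk) - b) * ξk) ^ 2
            = ((-(1 / ξk) - b) * (-(1 / ξk) - b)) * ξk ^ 2 := by ring
          _ = r ^ 2 * ξk ^ 2 := by rw [hn]
      have h4 : ρ * A ^ 2 = ξk ^ 2 * A := by
        linear_combination (ρ * (A - ξ0 * ξk) ^ 2) * h3 + ξk ^ 2 * hr2
          - (ρ * ((A - ξ0 * ξk) * (1 + b * ξk) + A) * ξk) * hbD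
      have h5 : ξk ^ 2 - ρ * A = 0 := by
        have h6 : ρ * A * A = ξk ^ 2 * A := by linear_combination h4
        have h7 := mul_right_cancel₀ hA.ne' h6
        linarith
      exact h22ne h5
    have h4 := keyH β
    rw [hn, sub_self, mul_zero] at h4
    have hnn : Complex.normSq (β * q₁ - p₁) = Complex.normSq (β * q₂ - p₂) := by
      have hne : ((ξk ^ 2 - ρ * A) ^ 2 : ℝ) ≠ 0 := pow_ne_zero 2 h22ne
      have h8 := (mul_eq_zero.1 h4).resolve_left hne
      linarith
    have hd2' : p₂ - β * q₂ ≠ 0 := fun h => hd2 (by linear_combination -h)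
    set u := (β * q₁ - p₁) / (p₂ - β * q₂) with hu_def
    have e0 : Complex.normSq (p₂ - β * q₂) = Complex.normSq (β * q₂ - p₂) := by
      rw [← Complex.normSq_neg]; congr 1; ring
    have hu : Complex.normSq u = 1 := by
      rw [hu_def, Complex.normSq_div, hnn, e0]
      exact div_self fun h => hd2 (Complex.normSq_eq_zero.1 h)
    have hu1 : ‖u‖ = 1 := by
      rw [← Real.sqrt_sq (norm_nonneg u), Complex.sq_norm, hu, Real.sqrt_one]
    refine ⟨u.arg, ?_⟩
    have hexp : Complex.exp ((u.arg : ℂ) * Complex.I) = u := by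
      have h8 := Complex.norm_mul_exp_arg_mul_I u
      rw [hu1, Complex.ofReal_one, one_mul] at h8
      exact h8
    rw [hexp]
    have hden : q₁ + q₂ * u ≠ 0 := by
      intro h0
      apply hqq
      have h1 : q₁ = -(q₂ * u) := eq_neg_of_add_eq_zero_left h0
      rw [h1, Complex.normSq_neg, Complex.normSq_mul, hu, mul_one]
    rw [eq_div_iff hden]
    have h9 : u * (p₂ - β * q₂) = β * q₁ - p₁ := by
      rw [hu_def, div_mul_cancel₀ _ hd2']
    linear_combination -h9
end

section
/- Let ξ₀, ξₖ > 0 and ξ_c ∈ ℂ nonzero with |ξ_c|² < ξ₀ξₖ, and ρ > 0. Let R_β = |ξ_c|/(√ρ(ξ₀ξₖ - |ξ_c|²)) and c_β = ξ₀/(|ξ_c|² - ξ₀ξₖ). Then the two intersections of the circle {β ∈ ℂ : |β - c_β| = R_β} with the real axis are β_r = c_β + R_β = (|ξ_c| - √ρ·ξ₀)/(√ρ(ξ₀ξₖ - |ξ_c|²)) and β_l = c_β - R_β, and β_r > -1/ξₖ if and only if ρ < ξₖ²/|ξ_c|². -/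
open Matrix

/-- The β-circle meets the real axis exactly at `β_r = c_β + R_β` and
`β_l = c_β - R_β`, with `β_r = (|ξ_c| - √ρ ξ₀)/(√ρ(ξ₀ξₖ - |ξ_c|²))`, and
`β_r > -1/ξₖ` iff `ρ < ξₖ²/|ξ_c|²`. -/
theorem beta_real_intersections (ξ0 ξk ρ : ℝ) (ξc : ℂ)
    (hξ0 : 0 < ξ0) (hξk : 0 < ξk) (hξc : ξc ≠ 0)
    (hcs : (‖ξc‖) ^ 2 < ξ0 * ξk) (hρ : 0 < ρ)
    (Rβ cβ βr βl : ℝ)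
    (hRβ : Rβ = ‖ξc‖ / (Real.sqrt ρ * (ξ0 * ξk - (‖ξc‖) ^ 2)))
    (hcβ : cβ = ξ0 / ((‖ξc‖) ^ 2 - ξ0 * ξk))
    (hβr : βr = cβ + Rβ) (hβl : βl = cβ - Rβ) :
    (∀ β : ℂ, (‖β - (cβ : ℂ)‖ = Rβ ∧ β.im = 0) ↔
        (β = (βr : ℂ) ∨ β = (βl : ℂ))) ∧
    βr = (‖ξc‖ - Real.sqrt ρ * ξ0) /
        (Real.sqrt ρ * (ξ0 * ξk - (‖ξc‖) ^ 2)) ∧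
    (βr > -1 / ξk ↔ ρ < ξk ^ 2 / (‖ξc‖) ^ 2) := by
  set a := ‖ξc‖ with ha_def
  have ha : 0 < a := by
    simpa [ha_def] using (norm_pos_iff.mpr hξc)
  have hD : 0 < ξ0 * ξk - a ^ 2 := sub_pos.mpr hcs
  have hs : 0 < Real.sqrt ρ := Real.sqrt_pos.mpr hρ
  have hs2 : Real.sqrt ρ ^ 2 = ρ := Real.sq_sqrt hρ.le
  have hRpos : 0 < Rβ := by
    rw [hRβ]; exact div_pos ha (mul_pos hs hD)
  -- part 2
  have hβr2 : βr = (a - Real.sqrt ρ * ξ0) / (Real.sqrt ρ * (ξ0 * ξk - a ^ 2)) := by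
    rw [hβr, hcβ, hRβ]
    have h1 : ξ0 * ξk - a ^ 2 ≠ 0 := ne_of_gt hD
    have h2 : a ^ 2 - ξ0 * ξk ≠ 0 := by intro h; apply h1; linarith
    field_simp
    ring
  refine ⟨?_, hβr2, ?_⟩
  · intro β
    constructor
    · rintro ⟨h1, h2⟩
      have hre : β = ((β.re : ℝ) : ℂ) := by
        apply Complex.ext <;> simp [h2]
      rw [hre] at h1 ⊢
      rw [← Complex.ofReal_sub, Complex.norm_real, Real.norm_eq_abs] at h1
      rcases abs_eq hRpos.le |>.mp h1 with h | h
      · left; rw [hβr]; norm_cast; linarith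
      · right; rw [hβl]; norm_cast; linarith
    · rintro (rfl | rfl)
      · refine ⟨?_, by simp⟩
        rw [← Complex.ofReal_sub, Complex.norm_real, Real.norm_eq_abs, hβr]
        simp [abs_of_pos hRpos]
      · refine ⟨?_, by simp⟩
        rw [← Complex.ofReal_sub, Complex.norm_real, Real.norm_eq_abs, hβl]
        simp [abs_of_pos hRpos]
  · -- part 3
    have key : βr + 1 / ξk = a * (ξk - Real.sqrt ρ * a) / (Real.sqrt ρ * (ξ0 * ξk - a ^ 2) * ξk) := by
      rw [hβr2]
      field_simp
      ring
    have hden : 0 < Real.sqrt ρ * (ξ0 * ξk - a ^ 2) * ξk := by positivity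
    constructor
    · intro h
      have hpos : 0 < βr + 1 / ξk := by
        have := h; rw [neg_div] at this; linarith
      rw [key] at hpos
      have hnum : 0 < a * (ξk - Real.sqrt ρ * a) := by
        rcases div_pos_iff.mp hpos with ⟨h1, _⟩ | ⟨_, h2⟩
        · exact h1
        · linarith
      have h3 : 0 < ξk - Real.sqrt ρ * a := by
        rcases mul_pos_iff.mp hnum with ⟨_, h1⟩ | ⟨h1, _⟩
        · exact h1
        · linarith
      have h4 : Real.sqrt ρ * a < ξk := by linarith
      have h5 : ρ * a ^ 2 < ξk ^ 2 := by
        nlinarith [mul_pos h3 (by positivity : (0:ℝ) < ξk + Real.sqrt ρ * a), hs2]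
      rw [lt_div_iff₀ (by positivity)]
      linarith
    · intro h
      have h5 : ρ * a ^ 2 < ξk ^ 2 := by
        rw [lt_div_iff₀ (by positivity : (0:ℝ) < a ^ 2)] at h
        linarith
      have h4 : Real.sqrt ρ * a < ξk := by nlinarith [hs2, mul_pos hs ha]
      have hpos : 0 < βr + 1 / ξk := by
        rw [key]
        exact div_pos (mul_pos ha (sub_pos.mpr h4)) hden
      rw [neg_div]; linarith
end

section
/- Let T be an N×N Hermitian positive definite complex matrix, a₀, aₖ ∈ ℂ^N linearly independent, ξ₀ = a₀ᴴT⁻¹a₀, ξₖ = aₖᴴT⁻¹aₖ, ξ_c = aₖᴴT⁻¹a₀ ≠ 0. For β ∈ ℂ with 1 + βξₖ ≠ 0 and w = T⁻¹a₀ - (βξ_c/(1+βξₖ))T⁻¹aₖ, one has wᴴTw = [ (ξ₀ξₖ - |ξ_c|²)ξₖ|β + 1/ξₖ|² + |ξ_c|²/ξₖ ] / |1 + βξₖ|². -/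
open Matrix
open scoped ComplexOrder

/-- Equation (68): the denominator of the previous array gain,
`wᴴTw = [(ξ₀ξₖ - |ξ_c|²)ξₖ|β + 1/ξₖ|² + |ξ_c|²/ξₖ] / |1 + βξₖ|²`. -/
theorem denominator_formula {N : ℕ} (T : Matrix (Fin N) (Fin N) ℂ)
    (hT : T.PosDef) (a₀ aₖ : Fin N → ℂ)
    (hli : LinearIndependent ℂ ![a₀, aₖ])
    (ξ0 ξk ξc : ℂ)
    (hξ0 : ξ0 = star a₀ ⬝ᵥ T⁻¹.mulVec a₀)
    (hξk : ξk = star aₖ ⬝ᵥ T⁻¹.mulVec aₖ)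
    (hξc : ξc = star aₖ ⬝ᵥ T⁻¹.mulVec a₀) (hξcne : ξc ≠ 0)
    (β : ℂ) (hden : 1 + β * ξk ≠ 0)
    (w : Fin N → ℂ)
    (hw : w = T⁻¹.mulVec a₀ - (β * ξc / (1 + β * ξk)) • T⁻¹.mulVec aₖ) :
    star w ⬝ᵥ T.mulVec w =
      ((ξ0 * ξk - ((‖ξc‖ : ℝ) : ℂ) ^ 2) * ξk *
          ((‖β + 1 / ξk‖ : ℝ) : ℂ) ^ 2 +
        ((‖ξc‖ : ℝ) : ℂ) ^ 2 / ξk) /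
        ((‖1 + β * ξk‖ : ℝ) : ℂ) ^ 2 := by
  have hTinv : T⁻¹.PosDef := hT.inv
  have hHerm : T⁻¹.IsHermitian := hTinv.isHermitian
  have haₖ : aₖ ≠ 0 := by simpa using hli.ne_zero 1
  have hk := hTinv.dotProduct_mulVec_pos haₖ
  rw [← hξk] at hk
  have hξkne : ξk ≠ 0 := hk.ne'
  have hξkr : (starRingEnd ℂ) ξk = ξk :=
    Complex.conj_eq_iff_im.mpr ((Complex.lt_def.mp hk).2).symm
  have key : ∀ x y : Fin N → ℂ, star (T⁻¹.mulVec x) ⬝ᵥ y = star x ⬝ᵥ T⁻¹.mulVec y := by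
    intro x y
    rw [star_mulVec, ← dotProduct_mulVec, hHerm.eq]
  have hcc : star a₀ ⬝ᵥ T⁻¹.mulVec aₖ = (starRingEnd ℂ) ξc := by
    rw [star_dotProduct, key, ← hξc]
    rfl
  set γ : ℂ := β * ξc / (1 + β * ξk) with hγ
  have hTw : T.mulVec w = a₀ - γ • aₖ := by
    have h1 : T * T⁻¹ = 1 := Matrix.mul_nonsing_inv T hT.det_pos.ne'.isUnit
    rw [hw]
    rw [Matrix.mulVec_sub, Matrix.mulVec_smul, mulVec_mulVec, mulVec_mulVec, h1,
      one_mulVec, one_mulVec]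
  have hL : star w ⬝ᵥ T.mulVec w =
      ξ0 - γ * (starRingEnd ℂ) ξc - (starRingEnd ℂ) γ * ξc
        + (starRingEnd ℂ) γ * (γ * ξk) := by
    rw [hTw, hw, star_sub, star_smul, sub_dotProduct, dotProduct_sub, dotProduct_sub,
      smul_dotProduct, smul_dotProduct, dotProduct_smul, dotProduct_smul,
      key a₀ a₀, key a₀ aₖ, key aₖ a₀, key aₖ aₖ, ← hξ0, ← hξk, ← hξc, hcc]
    simp only [smul_eq_mul, star_div₀, star_mul', starRingEnd_apply]
    ring
  have habs : ∀ z : ℂ, ((‖z‖ : ℝ) : ℂ) ^ 2 = z * (starRingEnd ℂ) z := by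
    intro z
    rw [show ((‖z‖ : ℝ) : ℂ) ^ 2 = ((‖z‖ ^ 2 : ℝ) : ℂ) by push_cast; ring,
      Complex.sq_norm, ← Complex.mul_conj]
  have hden' : 1 + (starRingEnd ℂ) β * ξk ≠ 0 := by
    intro h
    apply hden
    have := congrArg (starRingEnd ℂ) h
    simpa [hξkr] using this
  rw [hL, habs, habs, habs, hγ]
  simp only [map_div₀, _root_.map_mul, _root_.map_add, _root_.map_one, hξkr,
    Complex.conj_conj]
  have hden'' : 1 + ξk * (starRingEnd ℂ) β ≠ 0 := by rwa [mul_comm]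
  have hden''' : 1 + ξk * β ≠ 0 := by rwa [mul_comm]
  field_simp
  ring
end

section
/- Under the hypotheses of the previous statement (T Hermitian positive definite, a₀, aₖ linearly independent, ξ_c ≠ 0), the ratio |wᴴa₀|² / (wᴴTw), as a function of β on the circle |β - ξ₀/(|ξ_c|²-ξ₀ξₖ)| = R_β, equals ((ξ₀ξₖ-|ξ_c|²)/ξₖ)·R_β² / ( |β + 1/ξₖ|² + |ξ_c|²/((ξ₀ξₖ-|ξ_c|²)ξₖ²) ). In particular, maximizing |wᴴa₀|²/(wᴴTw) over β on this circle is equivalent to minimizing |β + 1/ξₖ|. -/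
open Matrix
open scoped ComplexOrder

lemma dot_star_comm' {N : ℕ} (u v : Fin N → ℂ) : star u ⬝ᵥ v = star (star v ⬝ᵥ u) := by
  simp [dotProduct, mul_comm]

lemma herm_dot' {N : ℕ} {M : Matrix (Fin N) (Fin N) ℂ} (hM : M.IsHermitian) (x y : Fin N → ℂ) :
    star x ⬝ᵥ M.mulVec y = star (star y ⬝ᵥ M.mulVec x) := by
  rw [show star (star y ⬝ᵥ M.mulVec x) = star (M.mulVec x) ⬝ᵥ y by simp [dotProduct, mul_comm],
    star_mulVec, dotProduct_mulVec]
  rw [hM.eq]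

lemma alg1' (s ξc c' ξ0 ξk : ℂ) (hu' : 1 + s * ξk ≠ 0) :
    (ξ0 - (s * c' / (1 + s * ξk)) * ξc) * (1 + s * ξk) = ξ0 + (ξ0*ξk - ξc * c') * s := by
  field_simp; ring

lemma alg2' (β s ξc c' ξ0 ξk : ℂ) (hu : 1 + β * ξk ≠ 0) (hu' : 1 + s * ξk ≠ 0) :
    ξ0 - (β * ξc / (1 + β * ξk)) * c' - (s * c' / (1 + s * ξk)) * ξc
      + (s * c' / (1 + s * ξk)) * (β * ξc / (1 + β * ξk)) * ξk
      = (ξ0 + (ξ0*ξk - ξc*c')*(β + s) + (ξ0*ξk - ξc*c')*ξk*(β*s)) / ((1 + β * ξk) * (1 + s * ξk)) := by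
  rw [eq_div_iff (mul_ne_zero hu hu')]
  have e1 : (1 + β * ξk) / (1 + β * ξk) = 1 := div_self hu
  have e2 : (1 + s * ξk) / (1 + s * ξk) = 1 := div_self hu'
  simp only [div_eq_mul_inv] at e1 e2 ⊢
  linear_combination (-(β * ξc * c') * (1 + s * ξk) + (s*c'*β*ξc*ξk)*(1 + s * ξk)*(1+s*ξk)⁻¹) * e1 + (-(s * c' * ξc) * (1 + β * ξk) + β*ξc*ξk*c'*s) * e2

/-- The weight vector `w(β) = T⁻¹a₀ - (βξ_c/(1+βξₖ)) T⁻¹aₖ`. -/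
noncomputable def oparcWeight {N : ℕ} (T : Matrix (Fin N) (Fin N) ℂ)
    (a₀ aₖ : Fin N → ℂ) (β : ℂ) : Fin N → ℂ :=
  T⁻¹.mulVec a₀ -
    (β * (star aₖ ⬝ᵥ T⁻¹.mulVec a₀) / (1 + β * (star aₖ ⬝ᵥ T⁻¹.mulVec aₖ))) •
      T⁻¹.mulVec aₖ

/-- The previous array gain `|wᴴa₀|² / (wᴴTw)` as a real number. -/
noncomputable def oparcGain {N : ℕ} (T : Matrix (Fin N) (Fin N) ℂ)
    (a₀ aₖ : Fin N → ℂ) (β : ℂ) : ℝ :=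
  (‖star (oparcWeight T a₀ aₖ β) ⬝ᵥ a₀‖) ^ 2 /
    (star (oparcWeight T a₀ aₖ β) ⬝ᵥ T.mulVec (oparcWeight T a₀ aₖ β)).re

set_option maxHeartbeats 1000000 in
/-- Key step (70): on the β-circle, the gain equals
`((ξ₀ξₖ-|ξ_c|²)/ξₖ)·R_β² / (|β + 1/ξₖ|² + |ξ_c|²/((ξ₀ξₖ-|ξ_c|²)ξₖ²))`,
so maximizing the gain is equivalent to minimizing `|β + 1/ξₖ|`. -/
theorem gain_formula_and_equivalence {N : ℕ} (T : Matrix (Fin N) (Fin N) ℂ)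
    (hT : T.PosDef) (a₀ aₖ : Fin N → ℂ)
    (hli : LinearIndependent ℂ ![a₀, aₖ])
    (ξ0 ξk : ℝ) (ξc : ℂ)
    (hξ0 : (ξ0 : ℂ) = star a₀ ⬝ᵥ T⁻¹.mulVec a₀)
    (hξk : (ξk : ℂ) = star aₖ ⬝ᵥ T⁻¹.mulVec aₖ)
    (hξc : ξc = star aₖ ⬝ᵥ T⁻¹.mulVec a₀) (hξcne : ξc ≠ 0)
    (ρ : ℝ) (hρ : 0 < ρ)
    (Rβ cβ : ℝ)
    (hRβ : Rβ = ‖ξc‖ / (Real.sqrt ρ * (ξ0 * ξk - (‖ξc‖) ^ 2)))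
    (hcβ : cβ = ξ0 / ((‖ξc‖) ^ 2 - ξ0 * ξk)) :
    (∀ β : ℂ, ‖β - (cβ : ℂ)‖ = Rβ →
        1 + β * ((ξk : ℝ) : ℂ) ≠ 0 →
        oparcGain T a₀ aₖ β =
          ((ξ0 * ξk - (‖ξc‖) ^ 2) / ξk) * Rβ ^ 2 /
            ((‖β + 1 / ((ξk : ℝ) : ℂ)‖) ^ 2 +
              (‖ξc‖) ^ 2 / ((ξ0 * ξk - (‖ξc‖) ^ 2) * ξk ^ 2))) ∧
    (∀ β₁ β₂ : ℂ,
        ‖β₁ - (cβ : ℂ)‖ = Rβ → 1 + β₁ * ((ξk : ℝ) : ℂ) ≠ 0 →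
        ‖β₂ - (cβ : ℂ)‖ = Rβ → 1 + β₂ * ((ξk : ℝ) : ℂ) ≠ 0 →
        (oparcGain T a₀ aₖ β₂ ≤ oparcGain T a₀ aₖ β₁ ↔
          ‖β₁ + 1 / ((ξk : ℝ) : ℂ)‖ ≤
            ‖β₂ + 1 / ((ξk : ℝ) : ℂ)‖)) := by
  classical
  have hTinv : T⁻¹.PosDef := hT.inv
  have hH : T⁻¹.IsHermitian := hTinv.1
  have hfin2 := linearIndependent_fin2.mp hli
  simp only [Matrix.cons_val_one, Matrix.head_cons, Matrix.cons_val_zero] at hfin2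
  have haₖ : aₖ ≠ 0 := hfin2.1
  have ha₀ : a₀ ≠ 0 := by
    intro h
    exact hfin2.2 0 (by simp [h])
  -- positivity of ξ0, ξk
  have hξkpos : 0 < ξk := by
    have h := hTinv.dotProduct_mulVec_pos haₖ
    rw [← hξk] at h
    exact_mod_cast h
  have hξ0pos : 0 < ξ0 := by
    have h := hTinv.dotProduct_mulVec_pos ha₀
    rw [← hξ0] at h
    exact_mod_cast h
  have hξkC : ((ξk : ℝ) : ℂ) ≠ 0 := by exact_mod_cast hξkpos.ne'
  -- Hermitian relations
  have hca : star a₀ ⬝ᵥ T⁻¹.mulVec aₖ = star ξc := by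
    rw [herm_dot' hH, ← hξc]
  -- D > 0 via strict Cauchy–Schwarz
  set D : ℝ := ξ0 * ξk - (‖ξc‖) ^ 2 with hDdef
  have hmulconj : ξc * star ξc = ((‖ξc‖ : ℝ) : ℂ) ^ 2 := by
    rw [show (star ξc) = (starRingEnd ℂ) ξc from rfl, Complex.mul_conj]
    rw [← Complex.sq_norm]
    push_cast
    ring
  have hD : 0 < D := by
    set v : Fin N → ℂ := ((ξk : ℝ) : ℂ) • a₀ - ξc • aₖ with hv
    have hvne : v ≠ 0 := by
      intro h
      rw [hv, sub_eq_zero] at h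
      apply hfin2.2 (ξc / ((ξk : ℝ) : ℂ))
      have h2 : (((ξk : ℝ) : ℂ))⁻¹ • (((ξk : ℝ) : ℂ) • a₀) = (((ξk : ℝ) : ℂ))⁻¹ • (ξc • aₖ) := by
        rw [h]
      rw [inv_smul_smul₀ hξkC, smul_smul] at h2
      rw [div_eq_inv_mul, ← h2]
    have hcomp : star v ⬝ᵥ T⁻¹.mulVec v = ((ξk * D : ℝ) : ℂ) := by
      rw [hv]
      simp only [mulVec_sub, mulVec_smul, star_sub, star_smul, sub_dotProduct,
        dotProduct_sub, smul_dotProduct, dotProduct_smul, smul_eq_mul,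
        Complex.star_def, Complex.conj_ofReal]
      rw [← hξ0, ← hξk, ← hξc, hca]
      rw [hDdef]
      push_cast
      linear_combination (-((ξk : ℝ) : ℂ)) * hmulconj
    have hpos := hTinv.dotProduct_mulVec_pos hvne
    rw [hcomp] at hpos
    have h9 : (0:ℝ) < ξk * D := by exact_mod_cast hpos
    nlinarith
  have hDC : ((D : ℝ) : ℂ) ≠ 0 := by exact_mod_cast hD.ne'
  have habsξc : 0 < ‖ξc‖ := by
    exact norm_pos_iff.mpr hξcne
  have hRβpos : 0 < Rβ := by
    rw [hRβ]
    exact div_pos habsξc (mul_pos (Real.sqrt_pos.mpr hρ) hD)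
  set K : ℝ := (‖ξc‖) ^ 2 / (D * ξk ^ 2) with hKdef
  have hKpos : 0 < K := by
    exact div_pos (pow_pos habsξc 2) (mul_pos hD (pow_pos hξkpos 2))
  -- the main pointwise formula
  have hmain : ∀ β : ℂ, ‖β - (cβ : ℂ)‖ = Rβ →
      1 + β * ((ξk : ℝ) : ℂ) ≠ 0 →
      oparcGain T a₀ aₖ β =
        (D / ξk) * Rβ ^ 2 / ((‖β + 1 / ((ξk : ℝ) : ℂ)‖) ^ 2 + K) := by
    intro β hcirc hu
    set u : ℂ := 1 + β * ((ξk : ℝ) : ℂ) with hudef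
    set γ : ℂ := β * ξc / u with hγdef
    have hwc : oparcWeight T a₀ aₖ β =
        T⁻¹.mulVec a₀ - γ • T⁻¹.mulVec aₖ := by
      rw [oparcWeight, hγdef, hudef, hξc, hξk]
    have hsu : star u = 1 + star β * ((ξk : ℝ) : ℂ) := by
      rw [hudef]
      simp [Complex.conj_ofReal]
    have hus : star u ≠ 0 := star_ne_zero.mpr hu
    have hsu' : (1 : ℂ) + star β * ((ξk : ℝ) : ℂ) ≠ 0 := hsu ▸ hus
    have hsγ : star γ = star β * star ξc / (1 + star β * ((ξk : ℝ) : ℂ)) := by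
      rw [hγdef, star_div₀, star_mul', hsu]
    -- scalar dot facts
    have hd00 : star (T⁻¹.mulVec a₀) ⬝ᵥ a₀ = ((ξ0 : ℝ) : ℂ) := by
      rw [dot_star_comm', ← hξ0, Complex.star_def, Complex.conj_ofReal]
    have hd0k : star (T⁻¹.mulVec a₀) ⬝ᵥ aₖ = star ξc := by
      rw [dot_star_comm', ← hξc]
    have hdk0 : star (T⁻¹.mulVec aₖ) ⬝ᵥ a₀ = ξc := by
      rw [dot_star_comm', hca, star_star]
    have hdkk : star (T⁻¹.mulVec aₖ) ⬝ᵥ aₖ = ((ξk : ℝ) : ℂ) := by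
      rw [dot_star_comm', ← hξk, Complex.star_def, Complex.conj_ofReal]
    -- w^H a₀
    have hX : star (oparcWeight T a₀ aₖ β) ⬝ᵥ a₀ = ((ξ0 : ℝ) : ℂ) - star γ * ξc := by
      rw [hwc]
      simp only [star_sub, star_smul, sub_dotProduct, smul_dotProduct, smul_eq_mul,
        hd00, hdk0]
    -- T w
    have := hT.isUnit.invertible
    have hTw : T.mulVec (oparcWeight T a₀ aₖ β) = a₀ - γ • aₖ := by
      rw [hwc, mulVec_sub, mulVec_smul, mulVec_mulVec, mulVec_mulVec,
        Matrix.mul_inv_of_invertible, one_mulVec, one_mulVec]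
    -- w^H T w
    have hY : star (oparcWeight T a₀ aₖ β) ⬝ᵥ T.mulVec (oparcWeight T a₀ aₖ β) =
        ((ξ0 : ℝ) : ℂ) - γ * star ξc - star γ * ξc + star γ * γ * ((ξk : ℝ) : ℂ) := by
      rw [hTw, hwc]
      simp only [star_sub, star_smul, sub_dotProduct, dotProduct_sub, smul_dotProduct,
        dotProduct_smul, smul_eq_mul, hd00, hd0k, hdk0, hdkk]
      ring
    -- numerator value
    have hXabs : ‖star (oparcWeight T a₀ aₖ β) ⬝ᵥ a₀‖ ^ 2 =
        D ^ 2 * Rβ ^ 2 / Complex.normSq u := by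
      have h1 : (((ξ0 : ℝ) : ℂ) - star γ * ξc) * star u =
          ((ξ0 : ℝ) : ℂ) + ((D : ℝ) : ℂ) * star β := by
        rw [hsγ, hsu]
        have := alg1' (star β) ξc (star ξc) ((ξ0 : ℝ) : ℂ) ((ξk : ℝ) : ℂ) hsu'
        rw [this, hmulconj, hDdef]
        push_cast
        ring
      have h2 : ‖((ξ0 : ℝ) : ℂ) + ((D : ℝ) : ℂ) * star β‖ = D * Rβ := by
        have : ((ξ0 : ℝ) : ℂ) + ((D : ℝ) : ℂ) * star β =
            star (((D : ℝ) : ℂ) * (β - (cβ : ℂ))) := by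
          rw [hcβ]
          simp only [star_mul', star_sub, Complex.star_def, Complex.conj_ofReal]
          rw [hDdef]
          push_cast
          have hne : ((‖ξc‖ : ℝ) : ℂ) ^ 2 - (ξ0:ℂ) * ξk ≠ 0 := by
            intro h
            apply hDC
            rw [hDdef]
            push_cast
            linear_combination -h
          field_simp
          ring
        rw [this]
        rw [show star (((D : ℝ) : ℂ) * (β - (cβ : ℂ))) =
            (starRingEnd ℂ) (((D : ℝ) : ℂ) * (β - (cβ : ℂ))) from rfl, Complex.norm_conj]
        rw [norm_mul, hcirc, Complex.norm_real, Real.norm_eq_abs, abs_of_pos hD]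
      have habsu : ‖u‖ ≠ 0 := by
        simpa using hu
      have h3 : ‖star (oparcWeight T a₀ aₖ β) ⬝ᵥ a₀‖ * ‖u‖ = D * Rβ := by
        rw [hX, show ‖u‖ = ‖star u‖ from (Complex.norm_conj u).symm,
          ← norm_mul, h1, h2]
      have h4 : ‖star (oparcWeight T a₀ aₖ β) ⬝ᵥ a₀‖ =
          D * Rβ / ‖u‖ := by
        field_simp at h3 ⊢
        exact h3
      rw [h4, div_pow, Complex.sq_norm]
      ring_nf
    -- denominator value
    have hYre : (star (oparcWeight T a₀ aₖ β) ⬝ᵥ T.mulVec (oparcWeight T a₀ aₖ β)).re =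
        (D * ξk * ((‖β + 1 / ((ξk : ℝ) : ℂ)‖) ^ 2 + K)) / Complex.normSq u := by
      have h1 : star (oparcWeight T a₀ aₖ β) ⬝ᵥ T.mulVec (oparcWeight T a₀ aₖ β) =
          (((ξ0 : ℝ) : ℂ) + ((D : ℝ) : ℂ) * (β + star β)
            + ((D : ℝ) : ℂ) * ((ξk : ℝ) : ℂ) * (β * star β)) / (u * star u) := by
        rw [hY, hγdef, hsγ, hudef, hsu]
        have := alg2' β (star β) ξc (star ξc) ((ξ0 : ℝ) : ℂ) ((ξk : ℝ) : ℂ)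
          (hudef ▸ hu) hsu'
        rw [this, hmulconj, hDdef]
        push_cast
        ring
      have h2 : star (oparcWeight T a₀ aₖ β) ⬝ᵥ T.mulVec (oparcWeight T a₀ aₖ β) =
          (((ξ0 + D * (2 * β.re) + D * ξk * Complex.normSq β) / Complex.normSq u : ℝ) : ℂ) := by
        rw [h1]
        rw [show β + star β = ((2 * β.re : ℝ) : ℂ) by
          rw [show (star β) = (starRingEnd ℂ) β from rfl, Complex.add_conj] <;> try (push_cast; try ring)]
        rw [show β * star β = ((Complex.normSq β : ℝ) : ℂ) by
          rw [show (star β) = (starRingEnd ℂ) β from rfl, Complex.mul_conj]]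
        rw [show u * star u = ((Complex.normSq u : ℝ) : ℂ) by
          rw [show (star u) = (starRingEnd ℂ) u from rfl, Complex.mul_conj]]
        push_cast
        ring
      rw [h2, Complex.ofReal_re]
      congr 1
      -- real identity
      have hA : (‖β + 1 / ((ξk : ℝ) : ℂ)‖) ^ 2 =
          (β.re + 1 / ξk) ^ 2 + β.im ^ 2 := by
        rw [Complex.sq_norm, Complex.normSq_apply]
        rw [show (1 / ((ξk : ℝ) : ℂ)) = (((1 / ξk : ℝ)) : ℂ) by push_cast; ring]
        simp
        ring
      rw [hA, hKdef, Complex.normSq_apply]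
      have hξ0eq : ξ0 = (D + (‖ξc‖) ^ 2) / ξk := by
        rw [hDdef]; field_simp; ring
      rw [hξ0eq]
      field_simp
      ring
    -- put together
    have hnsu : 0 < Complex.normSq u := by
      simpa [Complex.normSq_pos] using hu
    have hApos : 0 < (‖β + 1 / ((ξk : ℝ) : ℂ)‖) ^ 2 + K := by
      positivity
    rw [oparcGain, hXabs, hYre]
    rw [div_div_div_cancel_right₀]
    · field_simp
    · exact hnsu.ne'
  refine ⟨hmain, ?_⟩
  intro β₁ β₂ hc1 hu1 hc2 hu2
  rw [hmain β₁ hc1 hu1, hmain β₂ hc2 hu2]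
  set A₁ := (‖β₁ + 1 / ((ξk : ℝ) : ℂ)‖) with hA1
  set A₂ := (‖β₂ + 1 / ((ξk : ℝ) : ℂ)‖) with hA2
  have hA1n : 0 ≤ A₁ := norm_nonneg _
  have hA2n : 0 ≤ A₂ := norm_nonneg _
  have hCpos : 0 < (D / ξk) * Rβ ^ 2 := by positivity
  have hd1 : 0 < A₁ ^ 2 + K := by positivity
  have hd2 : 0 < A₂ ^ 2 + K := by positivity
  rw [div_le_div_iff₀ hd2 hd1]
  constructor
  · intro h
    have h2 : A₁ ^ 2 ≤ A₂ ^ 2 := by nlinarith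
    exact (pow_le_pow_iff_left₀ hA1n hA2n (by norm_num)).mp h2
  · intro h
    have h2 : A₁ ^ 2 ≤ A₂ ^ 2 := by
      exact pow_le_pow_left₀ hA1n h 2
    nlinarith
end

section
/- Let T be an N×N Hermitian invertible complex matrix, a₀, aₖ ∈ ℂ^N, γ ∈ ℂ with ξ_c = aₖᴴT⁻¹a₀ ≠ 0 and ξ_c + γξₖ ≠ 0 where ξₖ = aₖᴴT⁻¹aₖ, and let β = -γ/(ξ_c + γξₖ), assuming 1 + βξₖ ≠ 0. Then (T + β·aₖaₖᴴ)⁻¹ = T⁻¹ + (γ/ξ_c)·(T⁻¹aₖ)(T⁻¹aₖ)ᴴ. -/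
open Matrix

lemma mul_vecMulVec' {N : ℕ} (A : Matrix (Fin N) (Fin N) ℂ) (u v : Fin N → ℂ) :
    A * vecMulVec u v = vecMulVec (A.mulVec u) v := by
  ext i j
  simp [mul_apply, vecMulVec_apply, mulVec, dotProduct, Finset.sum_mul, mul_assoc]

lemma vecMulVec_mul' {N : ℕ} (A : Matrix (Fin N) (Fin N) ℂ) (u v : Fin N → ℂ) :
    vecMulVec u v * A = vecMulVec u (v ᵥ* A) := by
  ext i j
  simp [mul_apply, vecMulVec_apply, vecMul, dotProduct, Finset.mul_sum, mul_assoc]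

lemma vecMulVec_mul_vecMulVec' {N : ℕ} (u v w x : Fin N → ℂ) :
    vecMulVec u v * vecMulVec w x = (v ⬝ᵥ w) • vecMulVec u x := by
  ext i j
  simp only [mul_apply, vecMulVec_apply, Matrix.smul_apply, smul_eq_mul, dotProduct,
    Finset.sum_mul]
  exact Finset.sum_congr rfl fun k _ => by ring

lemma vecMulVec_mulVec' {N : ℕ} (u v w : Fin N → ℂ) :
    vecMulVec u v *ᵥ w = (v ⬝ᵥ w) • u := by
  ext i
  simp only [vecMulVec_apply, mulVec, dotProduct, Pi.smul_apply, smul_eq_mul, Finset.mul_sum, Finset.sum_mul]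
  exact Finset.sum_congr rfl fun k _ => by ring

lemma smul_vecMulVec' {N : ℕ} (r : ℂ) (u v : Fin N → ℂ) :
    vecMulVec (r • u) v = r • vecMulVec u v := by
  ext i j
  simp [vecMulVec_apply, mul_assoc]

/-- The VCM inverse update formula (27):
`(T + β aₖaₖᴴ)⁻¹ = T⁻¹ + (γ/ξ_c)·(T⁻¹aₖ)(T⁻¹aₖ)ᴴ`. -/
theorem vcm_inverse_update {N : ℕ} (T : Matrix (Fin N) (Fin N) ℂ)
    (hH : T.IsHermitian) (hT : IsUnit T) (a₀ aₖ : Fin N → ℂ)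
    (ξc ξk : ℂ)
    (hξc : ξc = star aₖ ⬝ᵥ T⁻¹.mulVec a₀)
    (hξk : ξk = star aₖ ⬝ᵥ T⁻¹.mulVec aₖ)
    (hξcne : ξc ≠ 0) (γ : ℂ) (hd : ξc + γ * ξk ≠ 0)
    (β : ℂ) (hβ : β = -γ / (ξc + γ * ξk)) (hden : 1 + β * ξk ≠ 0) :
    (T + β • vecMulVec aₖ (star aₖ))⁻¹ =
      T⁻¹ + (γ / ξc) • vecMulVec (T⁻¹.mulVec aₖ) (star (T⁻¹.mulVec aₖ)) := by
  have hdet : IsUnit T.det := (isUnit_iff_isUnit_det T).mp hT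
  have hTS : T * T⁻¹ = 1 := mul_nonsing_inv T hdet
  set S := T⁻¹ with hS
  set v : Fin N → ℂ := S.mulVec aₖ with hv
  set c : ℂ := γ / ξc with hc
  -- star v = (star aₖ) ᵥ* S
  have hHi : S.IsHermitian := hH.inv
  have hstarv : star v = (star aₖ) ᵥ* S := by
    rw [hv, star_mulVec, hHi.eq]
  have hTv : T.mulVec v = aₖ := by
    rw [hv, mulVec_mulVec, hTS, one_mulVec]
  have hdot : star aₖ ⬝ᵥ v = ξk := hξk.symm
  apply inv_eq_right_inv
  have expand : (T + β • vecMulVec aₖ (star aₖ)) * (S + c • vecMulVec v (star v))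
      = 1 + (c + β + β * c * ξk) • vecMulVec aₖ (star v) := by
    simp only [add_mul, mul_add, smul_mul_assoc, mul_smul_comm, hTS, mul_vecMulVec',
      hTv, vecMulVec_mul', ← hstarv, vecMulVec_mul_vecMulVec', hdot, smul_smul, vecMulVec_mulVec', smul_vecMulVec']
    module
  rw [expand]
  have hcoef : c + β + β * c * ξk = 0 := by
    rw [hc, hβ]
    field_simp
    ring
  rw [hcoef, zero_smul, add_zero]
end
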